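/- Let p be prime and f: ℤ/pℤ → ℂ. If f vanishes on a set of size at least k and f̂ vanishes on a set of size at least p − k (for some 0 ≤ k ≤ p) with these conditions forcing |supp(f)| + |supp(f̂)| ≤ p, then f = 0. -/

import Mathlib

/-!
The heart of the matter is Chebotarev's theorem: for `p` prime and `ζ` a primitive `p`-th root
of unity in a field of characteristic zero, every minor `det (ζ ^ (a i * b j))` with distinct
exponents `a i, b j < p` is nonzero. Write `det (x i ^ b j) = V(x) * Q(x)` with `V` the
Vandermonde product and `Q` an integer polynomial. Specialising `x i = X ^ i` and cancelling
`(X - 1)` from every factor of both Vandermonde products gives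
`Q(1, …, 1) * ∏ (j - i) = ∏ (b j - b i)`, which is prime to `p`. If the minor vanished, then
`Q(ζ ^ a 1, …, ζ ^ a n) = 0`, so the cyclotomic polynomial `Φ_p` divides
`Q(X ^ a 1, …, X ^ a n)` and `p = Φ_p(1)` divides `Q(1, …, 1)`.

If `f` vanishes on `S` and its transform on `T`, with `|Sᶜ| ≤ |T|`, pick `|Sᶜ|` frequencies in
`T`: the corresponding square minor of the Fourier matrix, with columns `Sᶜ`, kills `f` on `Sᶜ`.
-/

open Complex

noncomputable def dft {p : ℕ} [NeZero p] (f : ZMod p → ℂ) (ξ : ZMod p) : ℂ :=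
  (p : ℂ)⁻¹ * ∑ x : ZMod p, f x * Complex.exp (-2 * Real.pi * Complex.I * ((x.val : ℂ) * (ξ.val : ℂ)) / p)

open Finset MvPolynomial
open scoped Real

namespace MvPolynomial

variable {σ R : Type*} [CommRing R] [DecidableEq σ]

theorem sub_dvd_aeval_sub_aeval_update {S : Type*} [CommRing S] [Algebra R S]
    (P : MvPolynomial σ R) (v : σ → S) (j : σ) (s : S) :
    v j - s ∣ aeval v P - aeval (Function.update v j s) P := by
  induction P using MvPolynomial.induction_on with
  | C a => simp
  | add P Q hP hQ => simpa only [map_add, add_sub_add_comm] using dvd_add hP hQ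
  | mul_X P i hP =>
    set w := Function.update v j s
    have h : aeval v (P * X i) - aeval w (P * X i) =
        (aeval v P - aeval w P) * v i + aeval w P * (v i - w i) := by
      simp only [map_mul, aeval_X]; ring
    rw [h]
    refine dvd_add (hP.mul_right _) (Dvd.dvd.mul_left ?_ _)
    rcases eq_or_ne i j with rfl | hij
    · simp [w]
    · simp [w, hij]

theorem X_sub_X_dvd_sub_aeval_update (P : MvPolynomial σ R) (i j : σ) :
    X j - X i ∣ P - aeval (Function.update (X (R := R)) j (X i)) P := by
  simpa only [aeval_X_left_apply] using
    sub_dvd_aeval_sub_aeval_update (S := MvPolynomial σ R) P X j (X i)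

theorem prime_X_sub_X [IsDomain R] {i j : σ} (hij : i ≠ j) :
    Prime (X j - X i : MvPolynomial σ R) := by
  set φ := aeval (R := R) (Function.update (X (R := R)) j (X i))
  have hker : RingHom.ker φ = Ideal.span {X j - X i} := by
    refine le_antisymm (fun P hP => ?_) ?_
    · have h := X_sub_X_dvd_sub_aeval_update P i j
      rwa [show φ P = 0 from hP, sub_zero, ← Ideal.mem_span_singleton] at h
    · simp [Ideal.span_le, φ, Function.update_of_ne hij]
  rw [← Ideal.span_singleton_prime (sub_ne_zero.2 (X_injective.ne hij.symm)), ← hker]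
  exact RingHom.ker_isPrime φ

theorem eq_of_X_sub_X_dvd_X_sub_X [LinearOrder σ] [Nontrivial R] {i j k l : σ}
    (hij : i < j) (hkl : k < l) (h : (X j - X i : MvPolynomial σ R) ∣ X l - X k) :
    i = k ∧ j = l := by
  obtain ⟨c, hc⟩ := h
  have := congrArg (aeval (Function.update (X (R := R)) j (X i))) hc
  simp only [map_sub, map_mul, aeval_X, Function.update_self, Function.update_of_ne hij.ne,
    sub_self, zero_mul, sub_eq_zero, Function.update_apply] at this
  split_ifs at this <;> have := X_injective this <;> grind

theorem prod_X_sub_X_dvd [IsDomain R] [UniqueFactorizationMonoid R] {n : ℕ}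
    {P : MvPolynomial (Fin n) R}
    (hP : ∀ i j, i < j → aeval (Function.update (X (R := R)) j (X i)) P = 0) :
    ∏ i, ∏ j ∈ Ioi i, (X j - X i) ∣ P := by
  rw [prod_sigma']
  refine prod_dvd_of_isRelPrime (fun q hq q' hq' hne => ?_) fun q hq => ?_
  · have hq := mem_Ioi.1 (mem_sigma.1 hq).2
    have hq' := mem_Ioi.1 (mem_sigma.1 hq').2
    refine (prime_X_sub_X hq.ne).irreducible.isRelPrime_iff_not_dvd.2 fun h => hne ?_
    obtain ⟨h1, h2⟩ := eq_of_X_sub_X_dvd_X_sub_X hq hq' h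
    exact Sigma.ext h1 (heq_of_eq h2)
  · have h := X_sub_X_dvd_sub_aeval_update P q.1 q.2
    rwa [hP _ _ (mem_Ioi.1 (mem_sigma.1 hq).2), sub_zero] at h

end MvPolynomial

namespace Polynomial

theorem exists_prod_X_pow_sub_X_pow_eq {ι R : Type*} [CommRing R] (s : Finset ι)
    {u v : ι → ℕ} (huv : ∀ q ∈ s, u q ≤ v q) :
    ∃ g : R[X], ∏ q ∈ s, (X ^ v q - X ^ u q) = (X - 1) ^ #s * g ∧
      g.eval 1 = ∏ q ∈ s, ((v q : R) - u q) := by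
  refine ⟨∏ q ∈ s, X ^ u q * ∑ k ∈ range (v q - u q), X ^ k, ?_, ?_⟩
  · rw [← prod_const, ← prod_mul_distrib]
    refine prod_congr rfl fun q hq => ?_
    rw [mul_left_comm, mul_comm (X - 1), geom_sum_mul, mul_sub, ← pow_add,
      Nat.add_sub_cancel' (huv q hq), mul_one]
  · rw [eval_prod]
    refine prod_congr rfl fun q hq => ?_
    simp [eval_geom_sum, Nat.cast_sub (huv q hq)]

theorem eval_one_aeval_X_pow {σ R : Type*} [CommRing R] (e : σ → ℕ)
    (Q : MvPolynomial σ R) :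
    (MvPolynomial.aeval (fun i => X ^ e i) Q).eval 1 = MvPolynomial.eval 1 Q := by
  rw [← Polynomial.coe_aeval_eq_eval, comp_aeval_apply, ← MvPolynomial.coe_aeval_eq_eval]
  simp [Pi.one_def]

end Polynomial

section GenVandermonde

variable {R : Type*} [CommRing R] {n : ℕ}

def genVandermonde (a : Fin n → ℕ) (v : Fin n → R) : Matrix (Fin n) (Fin n) R :=
  Matrix.of fun i j => v i ^ a j

theorem exists_det_genVandermonde_X_eq [IsDomain R] [UniqueFactorizationMonoid R]
    (a : Fin n → ℕ) :
    ∃ Q : MvPolynomial (Fin n) R,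
      (genVandermonde a X).det = (∏ i, ∏ j ∈ Ioi i, (X j - X i)) * Q :=
  prod_X_sub_X_dvd fun i j hij => by
    rw [AlgHom.map_det]
    refine Matrix.det_zero_of_row_eq hij.ne' (funext fun k => ?_)
    simp [genVandermonde, Function.update_of_ne hij.ne]

theorem det_genVandermonde_eq_mul_aeval {S : Type*} [CommRing S] [Algebra R S]
    {a : Fin n → ℕ} {Q : MvPolynomial (Fin n) R}
    (hQ : (genVandermonde a X).det = (∏ i, ∏ j ∈ Ioi i, (X j - X i)) * Q) (v : Fin n → S) :
    (genVandermonde a v).det = (∏ i, ∏ j ∈ Ioi i, (v j - v i)) * aeval v Q := by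
  have h := congrArg (aeval v) hQ
  rw [AlgHom.map_det, map_mul, map_prod] at h
  convert h using 2
  · ext i j; simp [genVandermonde]
  · simp

theorem prod_sub_mul_eval_one_eq {a : Fin n → ℕ} (ha : StrictMono a)
    {Q : MvPolynomial (Fin n) ℤ}
    (hQ : (genVandermonde a X).det = (∏ i, ∏ j ∈ Ioi i, (X j - X i)) * Q) :
    (∏ i : Fin n, ∏ j ∈ Ioi i, ((j : ℤ) - i)) * eval 1 Q =
      ∏ i, ∏ j ∈ Ioi i, ((a j : ℤ) - a i) := by
  have hspec :=
    det_genVandermonde_eq_mul_aeval hQ fun i => (Polynomial.X : Polynomial ℤ) ^ (i : ℕ)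
  have hT : genVandermonde a (fun i => (Polynomial.X : Polynomial ℤ) ^ (i : ℕ)) =
      (Matrix.vandermonde fun j => Polynomial.X ^ a j).transpose := by
    ext i j; simp [genVandermonde, ← pow_mul, mul_comm]
  rw [hT, Matrix.det_transpose, Matrix.det_vandermonde, prod_sigma', prod_sigma'] at hspec
  obtain ⟨ga, hga, hga_one⟩ := Polynomial.exists_prod_X_pow_sub_X_pow_eq (R := ℤ) _
    (u := fun q : Σ _ : Fin n, Fin n => a q.1) (v := fun q => a q.2)
    fun q hq => (ha (mem_Ioi.1 (mem_sigma.1 hq).2)).le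
  obtain ⟨gid, hgid, hgid_one⟩ := Polynomial.exists_prod_X_pow_sub_X_pow_eq (R := ℤ) _
    (u := fun q : Σ _ : Fin n, Fin n => (q.1 : ℕ)) (v := fun q => q.2)
    fun q hq => (mem_Ioi.1 (mem_sigma.1 hq).2).le
  rw [hga, hgid, mul_assoc] at hspec
  have hX : (Polynomial.X - 1 : Polynomial ℤ) ≠ 0 := by
    simpa only [map_one] using Polynomial.X_sub_C_ne_zero (1 : ℤ)
  have hcancel := congrArg (Polynomial.eval 1) (mul_left_cancel₀ (pow_ne_zero _ hX) hspec)
  rw [Polynomial.eval_mul, hga_one, hgid_one, Polynomial.eval_one_aeval_X_pow] at hcancel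
  rw [prod_sigma', prod_sigma', hcancel]

end GenVandermonde

namespace IsPrimitiveRoot

variable {K : Type*} [Field K] [CharZero K] {p : ℕ} {ζ : K}

theorem prime_dvd_eval_one (hp : p.Prime) (hζ : IsPrimitiveRoot ζ p) {P : Polynomial ℤ}
    (hP : Polynomial.aeval ζ P = 0) : (p : ℤ) ∣ P.eval 1 := by
  have := Fact.mk hp
  have hdvd : Polynomial.cyclotomic p ℤ ∣ P := by
    rw [Polynomial.cyclotomic_eq_minpoly hζ hp.pos]
    exact minpoly.isIntegrallyClosed_dvd (hζ.isIntegral hp.pos) hP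
  simpa [Polynomial.eval_one_cyclotomic_prime] using Polynomial.eval_dvd (x := 1) hdvd

theorem det_pow_mul_ne_zero (hp : p.Prime) (hζ : IsPrimitiveRoot ζ p) {n : ℕ}
    {a b : Fin n → ℕ} (ha : Function.Injective a) (hb : StrictMono b) (hap : ∀ i, a i < p)
    (hbp : ∀ j, b j < p) :
    (Matrix.of fun i j => ζ ^ (a i * b j)).det ≠ 0 := by
  obtain ⟨Q, hQ⟩ := exists_det_genVandermonde_X_eq (R := ℤ) b
  have hV : ∏ i, ∏ j ∈ Ioi i, (ζ ^ a j - ζ ^ a i) ≠ 0 := by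
    simp only [prod_ne_zero_iff, mem_Ioi, sub_ne_zero]
    exact fun i _ j hij h => hij.ne' (ha (hζ.pow_inj (hap j) (hap i) h))
  have hpQ : ¬ (p : ℤ) ∣ eval 1 Q := by
    intro h
    have hprod := prod_sub_mul_eval_one_eq hb hQ ▸ dvd_mul_of_dvd_right h _
    simp only [(Nat.prime_iff_prime_int.1 hp).dvd_finsetProd_iff, mem_Ioi] at hprod
    obtain ⟨i, -, j, hij, hdvd⟩ := hprod
    have := Int.le_of_dvd (by have := hb hij; omega) hdvd
    have := hbp j
    omega
  intro hdet
  have hζQ : aeval (fun i => ζ ^ a i) Q = 0 := by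
    have h := det_genVandermonde_eq_mul_aeval hQ fun i => ζ ^ a i
    rw [show genVandermonde b (fun i => ζ ^ a i) = Matrix.of fun i j => ζ ^ (a i * b j) by
      ext; simp [genVandermonde, pow_mul], hdet] at h
    exact (mul_eq_zero.1 h.symm).resolve_left hV
  refine hpQ (Polynomial.eval_one_aeval_X_pow a Q ▸ hζ.prime_dvd_eval_one hp ?_)
  rw [comp_aeval_apply]
  simpa using hζQ

theorem eq_zero_of_forall_sum_mul_pow_eq_zero (hp : p.Prime) (hζ : IsPrimitiveRoot ζ p)
    {A B : Finset ℕ} (hAp : ∀ a ∈ A, a < p) (hBp : ∀ b ∈ B, b < p) (hAB : #A ≤ #B)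
    {c : ℕ → K} (h : ∀ b ∈ B, ∑ a ∈ A, c a * ζ ^ (a * b) = 0) :
    ∀ a ∈ A, c a = 0 := by
  obtain ⟨B', hB'B, hB'⟩ := exists_subset_card_eq hAB
  -- an index type `Fin n` that does not mention `A`, so that `A` can be rewritten below
  obtain ⟨n, hn⟩ : ∃ n, #A = n := ⟨_, rfl⟩
  set eA := A.orderEmbOfFin hn
  set eB := B'.orderEmbOfFin (hB'.trans hn)
  have hM : (Matrix.of fun i j => ζ ^ (eB i * eA j)).mulVec (c ∘ eA) = 0 := by
    ext i
    rw [Pi.zero_apply, ← h (eB i) (hB'B (orderEmbOfFin_mem _ _ i)),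
      ← map_orderEmbOfFin_univ A hn, sum_map]
    simp only [Matrix.mulVec, dotProduct, Matrix.of_apply, Function.comp_apply,
      RelEmbedding.coe_toEmbedding, mul_comm, eA]
  have hc := Matrix.eq_zero_of_mulVec_eq_zero (hζ.det_pow_mul_ne_zero hp eB.injective
    eA.strictMono (fun i => hBp _ (hB'B (orderEmbOfFin_mem _ _ i)))
    fun j => hAp _ (orderEmbOfFin_mem _ _ j)) hM
  intro a ha
  obtain ⟨j, rfl⟩ : a ∈ Set.range eA := by rwa [range_orderEmbOfFin]
  exact congrFun hc j

theorem eq_zero_of_forall_sum_mul_pow_val_eq_zero [NeZero p] (hp : p.Prime)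
    (hζ : IsPrimitiveRoot ζ p) {A B : Finset (ZMod p)} (hAB : #A ≤ #B) {c : ZMod p → K}
    (h : ∀ ξ ∈ B, ∑ x ∈ A, c x * ζ ^ (x.val * ξ.val) = 0) : ∀ x ∈ A, c x = 0 := by
  have hval := ZMod.val_injective p
  have hc := hζ.eq_zero_of_forall_sum_mul_pow_eq_zero hp (A := A.image ZMod.val)
    (B := B.image ZMod.val) (c := fun a => c a) (by simp [ZMod.val_lt]) (by simp [ZMod.val_lt])
    (by rwa [card_image_of_injective _ hval, card_image_of_injective _ hval])
    (by simpa [sum_image hval.injOn] using h)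
  simpa using hc

end IsPrimitiveRoot

theorem Complex.isPrimitiveRoot_exp_neg (n : ℕ) (h0 : n ≠ 0) :
    IsPrimitiveRoot (exp (-2 * π * I / n)) n := by
  simpa [← exp_neg, neg_div] using (isPrimitiveRoot_exp n h0).inv

theorem dft_eq_sum_mul_pow {p : ℕ} [NeZero p] (f : ZMod p → ℂ) (ξ : ZMod p) :
    dft f ξ = (p : ℂ)⁻¹ * ∑ x, f x * exp (-2 * π * I / p) ^ (x.val * ξ.val) := by
  simp only [dft, ← exp_nat_mul]
  congr! 4
  push_cast
  ring

theorem vanishing_forces_zero_general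
    (p k : ℕ) (hp : p.Prime) [NeZero p]
    (f : ZMod p → ℂ) (S T : Set (ZMod p))
    (hS : S.ncard ≥ k) (hT : T.ncard ≥ p - k)
    (hfS : ∀ x ∈ S, f x = 0) (hfT : ∀ ξ ∈ T, dft f ξ = 0) :
    f = 0 := by
  classical
  set ζ := exp (-2 * π * I / p)
  have hsum : ∀ ξ ∈ T.toFinset, ∑ x ∈ S.toFinsetᶜ, f x * ζ ^ (x.val * ξ.val) = 0 := by
    intro ξ hξ
    have h := hfT ξ (Set.mem_toFinset.1 hξ)
    rw [dft_eq_sum_mul_pow, mul_eq_zero, or_iff_right (inv_ne_zero (NeZero.ne _))] at h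
    rw [← h, sum_subset (subset_univ _)]
    intro x _ hx
    rw [hfS x (by simpa using hx), zero_mul]
  have hcard : #S.toFinsetᶜ ≤ #T.toFinset := by
    rw [card_compl, ZMod.card, ← Set.ncard_eq_toFinset_card', ← Set.ncard_eq_toFinset_card']
    omega
  have hf := (isPrimitiveRoot_exp_neg p hp.ne_zero).eq_zero_of_forall_sum_mul_pow_val_eq_zero
    hp hcard hsum
  funext x
  by_cases hx : x ∈ S
  · exact hfS x hx
  · exact hf x (by simpa using hx)

theorem vanishing_forces_zero
    (p k : ℕ) (hp : p.Prime) [NeZero p] (hk : k ≤ p)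
    (f : ZMod p → ℂ) (S T : Set (ZMod p))
    (hS : S.ncard ≥ k) (hT : T.ncard ≥ p - k)
    (hfS : ∀ x ∈ S, f x = 0) (hfT : ∀ ξ ∈ T, dft f ξ = 0) :
    f = 0 :=
  vanishing_forces_zero_general p k hp f S T hS hT hfS hfT
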